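/- arXiv:math/0410465 — 2 statements merged into one kernel-verified Lean document; each statement's English description precedes it below -/
import Mathlib

section
/- Let (y_0,...,y_k) be a closed Z^2-path in the initial configuration omega. If the partial cluster C_{(y_1,y_0)} and the partial cluster C_{(y_{k-1},y_k)} both contain protected sites, then every site y_0,...,y_k is stable. -/
open MeasureTheory Filter Set

/-- Sites of the lattice `ℤ²`. -/
abbrev Site : Type := ℤ × ℤ

/-- A configuration of open (`true`, i.e. `1`) and closed (`false`, i.e. `0`) sites. -/
abbrev Config : Type := Site → Bool

/-- Nearest-neighbour adjacency in `ℤ²`. -/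
def adj (x y : Site) : Prop := (x.1 - y.1).natAbs + (x.2 - y.2).natAbs = 1

/-- `*`-adjacency: adjacency in the close-packed lattice `ℤ²_cp`. -/
def adjStar (x y : Site) : Prop :=
  x ≠ y ∧ (x.1 - y.1).natAbs ≤ 1 ∧ (x.2 - y.2).natAbs ≤ 1

/-- The four nearest neighbours of a site. -/
def nbrs (x : Site) : Finset Site :=
  {(x.1 + 1, x.2), (x.1 - 1, x.2), (x.1, x.2 + 1), (x.1, x.2 - 1)}

/-- One step of the bootstrap dynamics: a closed site with at least three open
nearest neighbours becomes open; open sites are stable. -/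
def step (ω : Config) : Config := fun x =>
  ω x || decide (3 ≤ ((nbrs x).filter fun y => ω y = true).card)

/-- The configuration after `n` updates (`evolve ω 0 = ω`). -/
def evolve (ω : Config) : ℕ → Config
  | 0 => ω
  | n + 1 => step (evolve ω n)

/-- The site `x` is open in the final (limiting) configuration `ω̄`. -/
def finalOpen (ω : Config) (x : Site) : Prop := ∃ n, evolve ω n x = true

/-- A closed site `x` is stable iff it stays closed at all times, i.e. it is
closed in the final configuration `ω̄`. -/
def stableClosed (ω : Config) (x : Site) : Prop := ∀ n, evolve ω n x = false

/-- A self-avoiding path (with respect to an adjacency relation `A`) all of whose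
sites lie in the set `S`. -/
def IsPathIn (S : Set Site) (A : Site → Site → Prop) (k : ℕ) (π : Fin (k + 1) → Site) : Prop :=
  Function.Injective π ∧ (∀ i : Fin k, A (π i.castSucc) (π i.succ)) ∧ ∀ i, π i ∈ S

/-- `x` and `y` are joined by a path in `S` for the adjacency relation `A`. -/
def ConnIn (S : Set Site) (A : Site → Site → Prop) (x y : Site) : Prop :=
  ∃ (k : ℕ) (π : Fin (k + 1) → Site),
    π 0 = x ∧ π (Fin.last k) = y ∧ IsPathIn S A k π

/-- The plaquette (unit square of four sites) with lower-left corner `c`. -/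
def plaq (c : Site) : Finset Site :=
  {c, (c.1 + 1, c.2), (c.1, c.2 + 1), (c.1 + 1, c.2 + 1)}

/-- A site is protected if it is closed and belongs to a plaquette of closed sites. -/
def IsProtected (ω : Config) (x : Site) : Prop :=
  ω x = false ∧ ∃ c : Site, x ∈ plaq c ∧ ∀ y ∈ plaq c, ω y = false

/-- The partial cluster `C_{(x,x')}`: sites reachable from `x'` by a self-avoiding
`ℤ²`-path whose first step avoids `x` and whose sites all have the state of `x'`. -/
def partialCluster (ω : Config) (x x' : Site) : Set Site :=
  {y | ∃ (k : ℕ) (π : Fin (k + 1) → Site),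
    π 0 = x' ∧ π (Fin.last k) = y ∧ Function.Injective π ∧
    (∀ i : Fin k, adj (π i.castSucc) (π i.succ)) ∧
    (∀ i, ω (π i) = ω x') ∧ ∀ i : Fin (k + 1), (i : ℕ) = 1 → π i ≠ x}

lemma adj_symm' {x y : Site} (h : adj x y) : adj y x := by
  unfold adj at h ⊢; omega

lemma mem_nbrs_of_adj {x y : Site} (h : adj x y) : y ∈ nbrs x := by
  unfold adj at h
  simp only [nbrs, Finset.mem_insert, Finset.mem_singleton, Prod.ext_iff]
  omega

lemma robust_stable (ω : Config) (S : Set Site)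
    (hclosed : ∀ x ∈ S, ω x = false)
    (hrob : ∀ x ∈ S, ∃ y ∈ S, ∃ z ∈ S, adj x y ∧ adj x z ∧ y ≠ z) :
    ∀ n, ∀ x ∈ S, evolve ω n x = false := by
  intro n
  induction n with
  | zero => exact hclosed
  | succ n ih =>
    intro x hx
    obtain ⟨y, hy, z, hz, hxy, hxz, hyz⟩ := hrob x hx
    have hy' := mem_nbrs_of_adj hxy
    have hz' := mem_nbrs_of_adj hxz
    have hsub : ((nbrs x).filter fun w => evolve ω n w = true) ⊆
        ((nbrs x).erase y).erase z := by
      intro w hw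
      simp only [Finset.mem_filter] at hw
      refine Finset.mem_erase.mpr ⟨?_, Finset.mem_erase.mpr ⟨?_, hw.1⟩⟩
      · rintro rfl; rw [ih _ hz] at hw; simp at hw
      · rintro rfl; rw [ih _ hy] at hw; simp at hw
    have h4 : (nbrs x).card ≤ 4 := by
      unfold nbrs
      refine (Finset.card_insert_le _ _).trans (Nat.succ_le_succ ?_)
      refine (Finset.card_insert_le _ _).trans (Nat.succ_le_succ ?_)
      refine (Finset.card_insert_le _ _).trans (Nat.succ_le_succ ?_)
      simp
    have hle := Finset.card_le_card hsub
    rw [Finset.card_erase_of_mem (Finset.mem_erase.mpr ⟨hyz.symm, hz'⟩),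
        Finset.card_erase_of_mem hy'] at hle
    show step (evolve ω n) x = false
    unfold step
    rw [ih x hx]
    simp only [Bool.false_or, decide_eq_false_iff_not]
    omega

lemma plaq_good (c : Site) (x : Site) (hx : x ∈ plaq c) :
    ∃ y ∈ (plaq c : Finset Site), ∃ z ∈ (plaq c : Finset Site),
      adj x y ∧ adj x z ∧ y ≠ z := by
  have h0 : c ∈ plaq c := by simp [plaq]
  have h1 : ((c.1+1, c.2) : Site) ∈ plaq c := by simp [plaq]
  have h2 : ((c.1, c.2+1) : Site) ∈ plaq c := by simp [plaq]
  have h3 : ((c.1+1, c.2+1) : Site) ∈ plaq c := by simp [plaq]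
  simp only [plaq, Finset.mem_insert, Finset.mem_singleton] at hx
  rcases hx with rfl | rfl | rfl | rfl
  · exact ⟨_, h1, _, h2, by unfold adj; simp; try omega, by unfold adj; simp; try omega,
      by simp [Prod.ext_iff]; try omega⟩
  · exact ⟨_, h0, _, h3, by unfold adj; simp; try omega, by unfold adj; simp; try omega,
      by simp [Prod.ext_iff]; try omega⟩
  · exact ⟨_, h0, _, h3, by unfold adj; simp; try omega, by unfold adj; simp; try omega,
      by simp [Prod.ext_iff]; try omega⟩
  · exact ⟨_, h1, _, h2, by unfold adj; simp; try omega, by unfold adj; simp; try omega,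
      by simp [Prod.ext_iff]; try omega⟩

lemma interior_good {k : ℕ} (π : Fin (k+1) → Site) (hinj : Function.Injective π)
    (hadj : ∀ i : Fin k, adj (π i.castSucc) (π i.succ))
    (i : Fin (k+1)) (h0 : 0 < (i:ℕ)) (hik : (i:ℕ) < k) :
    ∃ y ∈ Set.range π, ∃ z ∈ Set.range π, adj (π i) y ∧ adj (π i) z ∧ y ≠ z := by
  have hik' : (i:ℕ) - 1 < k := by omega
  have h1 := hadj ⟨(i:ℕ) - 1, hik'⟩
  have h2 := hadj ⟨(i:ℕ), hik⟩
  have e1 : (⟨(i:ℕ)-1, hik'⟩ : Fin k).succ = i := by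
    apply Fin.ext; simp; omega
  have e2 : (⟨(i:ℕ), hik⟩ : Fin k).castSucc = i := by
    apply Fin.ext; simp
  rw [e1] at h1
  rw [e2] at h2
  refine ⟨_, ⟨_, rfl⟩, _, ⟨_, rfl⟩, adj_symm' h1, h2, ?_⟩
  intro he
  have he2 := hinj he
  have : (((⟨(i:ℕ)-1, hik'⟩ : Fin k).castSucc : Fin (k+1)) : ℕ)
      = (((⟨(i:ℕ), hik⟩ : Fin k).succ : Fin (k+1)) : ℕ) := by rw [he2]
  simp at this; try omega

set_option maxHeartbeats 2000000 in
/-- A closed `ℤ²`-path `(y_0, …, y_k)` is stable (all its sites are stable) if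
the partial clusters `C_{(y_1,y_0)}` and `C_{(y_{k-1},y_k)}` both contain
protected sites. -/
theorem stable_path (ω : Config) (k : ℕ) (hk : 1 ≤ k)
    (π : Fin (k + 1) → Site)
    (hpath : IsPathIn {z | ω z = false} adj k π)
    (hstart : ∃ z ∈ partialCluster ω (π ⟨1, by omega⟩) (π 0), IsProtected ω z)
    (hend : ∃ z ∈ partialCluster ω (π ⟨k - 1, by omega⟩) (π (Fin.last k)), IsProtected ω z) :
    ∀ i, stableClosed ω (π i) := by
  obtain ⟨hinj, hadj, hmem⟩ := hpath
  obtain ⟨z1, ⟨m, ρ, hρ0, hρl, hρinj, hρadj, hρω, hρne⟩, _, c, hz1c, hc⟩ := hstart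
  obtain ⟨z2, ⟨m', σ, hσ0, hσl, hσinj, hσadj, hσω, hσne⟩, _, c', hz2c, hc'⟩ := hend
  have hω0 : ω (π 0) = false := hmem 0
  have hωk : ω (π (Fin.last k)) = false := hmem _
  set S : Set Site :=
    Set.range π ∪ Set.range ρ ∪ ↑(plaq c) ∪ Set.range σ ∪ ↑(plaq c') with hS
  have h1 : ∀ i, π i ∈ S := fun i => Or.inl (Or.inl (Or.inl (Or.inl ⟨i, rfl⟩)))
  have h2 : ∀ j, ρ j ∈ S := fun j => Or.inl (Or.inl (Or.inl (Or.inr ⟨j, rfl⟩)))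
  have h3 : ∀ x ∈ plaq c, x ∈ S := fun x hx => Or.inl (Or.inl (Or.inr hx))
  have h4 : ∀ j, σ j ∈ S := fun j => Or.inl (Or.inr ⟨j, rfl⟩)
  have h5 : ∀ x ∈ plaq c', x ∈ S := fun x hx => Or.inr hx
  have hclosed : ∀ x ∈ S, ω x = false := by
    intro x hx
    simp only [hS, Set.mem_union, Set.mem_range, Finset.mem_coe] at hx
    rcases hx with ((((⟨i, rfl⟩ | ⟨j, rfl⟩) | hx) | ⟨j, rfl⟩) | hx)
    · exact hmem i
    · exact (hρω j).trans hω0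
    · exact hc x hx
    · exact (hσω j).trans hωk
    · exact hc' x hx
  have good0 : ∃ y ∈ S, ∃ w ∈ S, adj (π 0) y ∧ adj (π 0) w ∧ y ≠ w := by
    rcases Nat.eq_zero_or_pos m with hm | hm
    · subst hm
      have e : π 0 = z1 := by
        have e0 : Fin.last 0 = (0 : Fin 1) := rfl
        rw [← hρ0, ← hρl, e0]
      obtain ⟨y, hy, w, hw, a1, a2, a3⟩ := plaq_good c (π 0) (e ▸ hz1c)
      exact ⟨y, h3 _ hy, w, h3 _ hw, a1, a2, a3⟩
    · have hA := hadj ⟨0, by omega⟩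
      have eA : ((⟨0, by omega⟩ : Fin k).castSucc) = (0 : Fin (k+1)) := by
        apply Fin.ext; simp
      have eB : ((⟨0, by omega⟩ : Fin k).succ) = (⟨1, by omega⟩ : Fin (k+1)) := by
        apply Fin.ext; simp
      rw [eA, eB] at hA
      have hB := hρadj ⟨0, hm⟩
      have eC : ((⟨0, hm⟩ : Fin m).castSucc) = (0 : Fin (m+1)) := by
        apply Fin.ext; simp
      have eD : ((⟨0, hm⟩ : Fin m).succ) = (⟨1, by omega⟩ : Fin (m+1)) := by
        apply Fin.ext; simp
      rw [eC, eD, hρ0] at hB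
      exact ⟨_, h1 ⟨1, by omega⟩, _, h2 ⟨1, by omega⟩, hA, hB,
        Ne.symm (hρne ⟨1, by omega⟩ rfl)⟩
  have goodk : ∃ y ∈ S, ∃ w ∈ S, adj (π (Fin.last k)) y ∧ adj (π (Fin.last k)) w ∧ y ≠ w := by
    rcases Nat.eq_zero_or_pos m' with hm | hm
    · subst hm
      have e : π (Fin.last k) = z2 := by
        have e0 : Fin.last 0 = (0 : Fin 1) := rfl
        rw [← hσ0, ← hσl, e0]
      obtain ⟨y, hy, w, hw, a1, a2, a3⟩ := plaq_good c' (π (Fin.last k)) (e ▸ hz2c)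
      exact ⟨y, h5 _ hy, w, h5 _ hw, a1, a2, a3⟩
    · have hA := hadj ⟨k - 1, by omega⟩
      have eA : ((⟨k - 1, by omega⟩ : Fin k).castSucc) = (⟨k - 1, by omega⟩ : Fin (k+1)) := by
        apply Fin.ext; simp
      have eB : ((⟨k - 1, by omega⟩ : Fin k).succ) = Fin.last k := by
        apply Fin.ext; simp; omega
      rw [eA, eB] at hA
      have hB := hσadj ⟨0, hm⟩
      have eC : ((⟨0, hm⟩ : Fin m').castSucc) = (0 : Fin (m'+1)) := by
        apply Fin.ext; simp
      have eD : ((⟨0, hm⟩ : Fin m').succ) = (⟨1, by omega⟩ : Fin (m'+1)) := by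
        apply Fin.ext; simp
      rw [eC, eD, hσ0] at hB
      exact ⟨_, h1 ⟨k - 1, by omega⟩, _, h4 ⟨1, by omega⟩, adj_symm' hA, hB,
        Ne.symm (hσne ⟨1, by omega⟩ rfl)⟩
  have hrob : ∀ x ∈ S, ∃ y ∈ S, ∃ w ∈ S, adj x y ∧ adj x w ∧ y ≠ w := by
    intro x hx
    simp only [hS, Set.mem_union, Set.mem_range, Finset.mem_coe] at hx
    rcases hx with ((((⟨i, rfl⟩ | ⟨j, rfl⟩) | hx) | ⟨j, rfl⟩) | hx)
    · by_cases h0 : (i : ℕ) = 0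
      · have : i = 0 := by apply Fin.ext; simp [h0]
        rw [this]; exact good0
      by_cases hkk : (i : ℕ) = k
      · have : i = Fin.last k := by apply Fin.ext; simp [hkk]
        rw [this]; exact goodk
      · obtain ⟨y, ⟨a, rfl⟩, w, ⟨b, rfl⟩, a1, a2, a3⟩ :=
          interior_good π hinj hadj i (by omega) (by have := i.isLt; omega)
        exact ⟨_, h1 a, _, h1 b, a1, a2, a3⟩
    · by_cases j0 : (j : ℕ) = 0
      · have : ρ j = π 0 := by
          have ej : j = 0 := by apply Fin.ext; simp [j0]
          rw [ej, hρ0]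
        rw [this]; exact good0
      by_cases jm : (j : ℕ) = m
      · have : ρ j = z1 := by
          have ej : j = Fin.last m := by apply Fin.ext; simp [jm]
          rw [ej, hρl]
        rw [this]
        obtain ⟨y, hy, w, hw, a1, a2, a3⟩ := plaq_good c z1 hz1c
        exact ⟨y, h3 _ hy, w, h3 _ hw, a1, a2, a3⟩
      · obtain ⟨y, ⟨a, rfl⟩, w, ⟨b, rfl⟩, a1, a2, a3⟩ :=
          interior_good ρ hρinj hρadj j (by omega) (by have := j.isLt; omega)
        exact ⟨_, h2 a, _, h2 b, a1, a2, a3⟩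
    · obtain ⟨y, hy, w, hw, a1, a2, a3⟩ := plaq_good c x hx
      exact ⟨y, h3 _ hy, w, h3 _ hw, a1, a2, a3⟩
    · by_cases j0 : (j : ℕ) = 0
      · have : σ j = π (Fin.last k) := by
          have ej : j = 0 := by apply Fin.ext; simp [j0]
          rw [ej, hσ0]
        rw [this]; exact goodk
      by_cases jm : (j : ℕ) = m'
      · have : σ j = z2 := by
          have ej : j = Fin.last m' := by apply Fin.ext; simp [jm]
          rw [ej, hσl]
        rw [this]
        obtain ⟨y, hy, w, hw, a1, a2, a3⟩ := plaq_good c' z2 hz2c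
        exact ⟨y, h5 _ hy, w, h5 _ hw, a1, a2, a3⟩
      · obtain ⟨y, ⟨a, rfl⟩, w, ⟨b, rfl⟩, a1, a2, a3⟩ :=
          interior_good σ hσinj hσadj j (by omega) (by have := j.isLt; omega)
        exact ⟨_, h4 a, _, h4 b, a1, a2, a3⟩
    · obtain ⟨y, hy, w, hw, a1, a2, a3⟩ := plaq_good c' x hx
      exact ⟨y, h5 _ hy, w, h5 _ hw, a1, a2, a3⟩
  exact fun i n => robust_stable ω S hclosed hrob n (π i) (h1 i)
end

section
/- For all n in [1,infinity] and p in (0, p_c^*], the two-point connectivity functions satisfy tau_p(x) <= tau_{p,n}(x) <= p^{-c_2} tau_p(x) for a suitable constant c_2, where tau_{p,n}(x) is the probability that the origin and x lie in the same open *-cluster at time n. -/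
open MeasureTheory Filter Set

/-- `μ` is the Bernoulli product measure with density `p` of open sites:
all finite-dimensional marginals are products of Bernoulli(`p`) laws. -/
def IsBernoulli (p : ℝ) (μ : Measure Config) : Prop :=
  ∀ (s : Finset Site) (η : Site → Bool),
    μ {ω : Config | ∀ x ∈ s, ω x = η x} =
      ∏ x ∈ s, ENNReal.ofReal (if η x then p else 1 - p)

/-- `x` belongs to an infinite cluster of `S` for the adjacency relation `A`. -/
def InfClusterIn (S : Set Site) (A : Site → Site → Prop) (x : Site) : Prop :=
  x ∈ S ∧ {y | ConnIn S A x y}.Infinite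

/-- The critical probability `p_c` of independent site percolation on `ℤ²`. -/
noncomputable def pc : ℝ :=
  sInf {p : ℝ | p ∈ Set.Icc (0 : ℝ) 1 ∧
    ∀ μ : Measure Config, IsProbabilityMeasure μ → IsBernoulli p μ →
      0 < μ {ω : Config | ∃ x : Site, InfClusterIn {z | ω z = true} adj x}}

/-!
Open sites stay open, which gives the lower bounds. For the upper bounds: a site opened by
the dynamics has at least three open nearest neighbours, hence at most one closed one, so its
open `*`-neighbours are `*`-connected among themselves, and it shares an open `*`-neighbour
with every closed `*`-neighbour. Replacing each newly opened site of a `*`-path by an adjacent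
initially open site therefore reroutes the path through initially open sites, provided its
endpoints are initially open. A path in the final configuration is already present at a
finite time. Finally, opening `o` and `x` by hand only enlarges the later configurations, and
by independence it costs a factor `p ^ #{o, x} ≥ p ^ 2`.
-/

open Relation ProbabilityTheory

section Connectivity

variable {S T : Set Site} {A : Site → Site → Prop} {a b c : Site}

abbrev ChainIn (S : Set Site) (A : Site → Site → Prop) : Site → Site → Prop :=
  ReflTransGen fun u v => A u v ∧ v ∈ S

lemma ChainIn.mem (ha : a ∈ S) (h : ChainIn S A a b) : b ∈ S := by
  induction h with
  | refl => exact ha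
  | tail _ hcb _ => exact hcb.2

lemma ChainIn.symm (hA : ∀ ⦃u v⦄, A u v → A v u) (ha : a ∈ S) (h : ChainIn S A a b) :
    ChainIn S A b a := by
  induction h with
  | refl => exact .refl
  | tail hac hcb ih => exact .head ⟨hA hcb.1, ChainIn.mem ha hac⟩ ih

lemma ConnIn.mono (hST : S ⊆ T) (h : ConnIn S A a b) : ConnIn T A a b := by
  obtain ⟨k, π, h0, hk, hinj, hA, hS⟩ := h
  exact ⟨k, π, h0, hk, hinj, hA, fun i => hST (hS i)⟩

lemma ConnIn.refl (ha : a ∈ S) : ConnIn S A a a :=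
  ⟨0, fun _ => a, rfl, rfl, fun i j _ => Fin.ext (by omega), fun i => i.elim0, fun _ => ha⟩

/-- If `b` already lies on the path, the path is cut there instead of extended. -/
lemma ConnIn.tail (h : ConnIn S A a c) (hcb : A c b) (hb : b ∈ S) : ConnIn S A a b := by
  obtain ⟨k, π, h0, hk, hinj, hA, hS⟩ := h
  by_cases hmem : b ∈ Set.range π
  · obtain ⟨j, rfl⟩ := hmem
    refine ⟨j, π ∘ Fin.castLE j.isLt, h0, congrArg π (Fin.ext rfl),
      hinj.comp (Fin.castLE_injective _), fun i => ?_, fun i => hS _⟩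
    convert hA ⟨i, by omega⟩ using 2 <;> exact congrArg π (Fin.ext rfl)
  · refine ⟨k + 1, Fin.snoc π b, by simpa using h0, Fin.snoc_last _ _,
      Fin.snoc_injective_of_injective hinj hmem, fun i => ?_, fun i => ?_⟩
    · induction i using Fin.lastCases with
      | last => simpa [hk] using hcb
      | cast i =>
        rw [Fin.succ_castSucc, Fin.snoc_castSucc, Fin.snoc_castSucc]
        exact hA i
    · induction i using Fin.lastCases with
      | last => simpa using hb
      | cast i => simpa using hS i

lemma ConnIn.chainIn (h : ConnIn S A a b) : ChainIn S A a b := by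
  obtain ⟨k, π, rfl, rfl, -, hA, hS⟩ := h
  suffices ∀ i, ChainIn S A (π 0) (π i) from this (Fin.last k)
  intro i
  induction i using Fin.induction with
  | zero => exact .refl
  | succ i ih => exact ih.tail ⟨hA i, hS i.succ⟩

lemma connIn_iff_chainIn : ConnIn S A a b ↔ a ∈ S ∧ ChainIn S A a b := by
  constructor
  · intro h
    refine ⟨?_, h.chainIn⟩
    obtain ⟨k, π, rfl, -, -, -, hS⟩ := h
    exact hS 0
  · rintro ⟨ha, h⟩
    induction h with
    | refl => exact .refl ha
    | tail _ hcb ih => exact ih.tail hcb.1 hcb.2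

end Connectivity

lemma adjStar_symm ⦃u v : Site⦄ : adjStar u v → adjStar v u := fun ⟨hne, h1, h2⟩ =>
  ⟨hne.symm, by omega, by omega⟩

lemma adjStar_add_left_iff {y a b : Site} : adjStar (y + a) (y + b) ↔ adjStar a b := by
  simp [adjStar]

lemma adjStar_of_mem_nbrs {y u : Site} (h : u ∈ nbrs y) : adjStar y u := by
  simp only [nbrs, Finset.mem_insert, Finset.mem_singleton] at h
  rcases h with rfl | rfl | rfl | rfl <;> simp [adjStar, Prod.ext_iff] <;> omega

instance (x y : Site) : Decidable (adjStar x y) := by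
  unfold adjStar; infer_instance

def axes : Finset Site := {(1, 0), (-1, 0), (0, 1), (0, -1)}

def starOffsets : Finset Site :=
  {(1, 0), (-1, 0), (0, 1), (0, -1), (1, 1), (1, -1), (-1, 1), (-1, -1)}

lemma adjStar_iff_exists_offset {y u : Site} :
    adjStar y u ↔ ∃ d ∈ starOffsets, u = y + d := by
  constructor
  · rintro ⟨hne, h1, h2⟩
    refine ⟨u - y, ?_, by simp⟩
    simp only [starOffsets, Finset.mem_insert, Finset.mem_singleton, Prod.ext_iff,
      Prod.fst_sub, Prod.snd_sub]
    simp only [ne_eq, Prod.ext_iff] at hne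
    omega
  · rintro ⟨d, hd, rfl⟩
    simp only [starOffsets, Finset.mem_insert, Finset.mem_singleton] at hd
    rcases hd with rfl | rfl | rfl | rfl | rfl | rfl | rfl | rfl <;> simp [adjStar]

lemma add_mem_nbrs {y a : Site} (ha : a ∈ axes) : y + a ∈ nbrs y := by
  simp only [axes, Finset.mem_insert, Finset.mem_singleton] at ha
  rcases ha with rfl | rfl | rfl | rfl <;> simp [nbrs, Prod.ext_iff, sub_eq_add_neg]

lemma axes_subset_starOffsets : axes ⊆ starOffsets := by decide

/-- Here `c` is the direction of the only nearest neighbour of a newly opened site that may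
be closed: the three other nearest neighbours link every `*`-neighbour to the hub `h`. -/
lemma exists_axis_hub : ∀ c ∈ axes, ∃ h ∈ axes, h ≠ c ∧ ∀ d ∈ starOffsets,
    d = h ∨ adjStar d h ∨ ∃ a ∈ axes, a ≠ c ∧ adjStar d a ∧ adjStar a h := by
  decide

lemma exists_axis_adjStar : ∀ c ∈ axes, ∀ d ∈ starOffsets, (d ∈ axes → d = c) →
    ∃ e ∈ axes, e ≠ c ∧ adjStar d e := by
  decide

section Bootstrap

variable {ω ω' : Config} {y z u w : Site}

lemma le_step (ω : Config) : ω ≤ step ω := fun _ =>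
  Bool.le_iff_imp.2 fun h => by simp [step, h]

lemma monotone_step : Monotone step := fun ω ω' h z => by
  simp only [step, Bool.le_iff_imp, Bool.or_eq_true, decide_eq_true_eq]
  refine Or.imp (Bool.le_iff_imp.1 (h z)) fun h3 => h3.trans (Finset.card_le_card ?_)
  exact Finset.monotone_filter_right _ fun v _ hv => Bool.le_iff_imp.1 (h v) hv

lemma monotone_evolve_time (ω : Config) : Monotone (evolve ω) :=
  monotone_nat_of_le_succ fun n => le_step (evolve ω n)

lemma monotone_evolve (n : ℕ) : Monotone fun ω => evolve ω n := by
  induction n with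
  | zero => exact fun _ _ h => h
  | succ n ih => exact fun _ _ h => monotone_step (ih h)

lemma setOf_eq_true_subset (h : ω ≤ ω') : {z | ω z = true} ⊆ {z | ω' z = true} :=
  fun z hz => Bool.le_iff_imp.1 (h z) hz

lemma evolve_eq_true_of_eq_true (h : ω z = true) (n : ℕ) : evolve ω n z = true :=
  setOf_eq_true_subset (monotone_evolve_time ω (Nat.zero_le n)) h

def NewlyOpen (ω : Config) (y : Site) : Prop := ω y = false ∧ step ω y = true

lemma NewlyOpen.three_le_card_open_nbrs (hy : NewlyOpen ω y) :
    3 ≤ ((nbrs y).filter fun v => ω v = true).card := by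
  simpa [step, hy.1] using hy.2

lemma NewlyOpen.eq_of_eq_false (hy : NewlyOpen ω y) (hu : u ∈ nbrs y) (hw : w ∈ nbrs y)
    (hu' : ω u = false) (hw' : ω w = false) : u = w := by
  by_contra hne
  have hsub : (nbrs y).filter (fun v => ω v = true) ⊆ ((nbrs y).erase u).erase w := by
    intro v hv
    simp only [Finset.mem_filter] at hv
    simp only [Finset.mem_erase]
    refine ⟨?_, ?_, hv.1⟩ <;> rintro rfl <;> simp_all
  have hcard := (Finset.card_le_card hsub).trans_lt' hy.three_le_card_open_nbrs
  rw [Finset.card_erase_of_mem (Finset.mem_erase.2 ⟨Ne.symm hne, hw⟩),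
    Finset.card_erase_of_mem hu] at hcard
  have : (nbrs y).card ≤ 4 := Finset.card_le_four
  omega

lemma NewlyOpen.exists_open_nbr (hy : NewlyOpen ω y) : ∃ v ∈ nbrs y, ω v = true := by
  obtain ⟨v, hv⟩ := Finset.card_pos.1 (hy.three_le_card_open_nbrs.trans_lt' three_pos)
  exact ⟨v, (Finset.mem_filter.1 hv).1, (Finset.mem_filter.1 hv).2⟩

lemma NewlyOpen.exists_axis (hy : NewlyOpen ω y) :
    ∃ c ∈ axes, ∀ a ∈ axes, a ≠ c → ω (y + a) = true := by
  by_cases hclosed : ∃ c ∈ axes, ω (y + c) = false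
  · obtain ⟨c, hc, hc'⟩ := hclosed
    refine ⟨c, hc, fun a ha hac => ?_⟩
    by_contra ha'
    exact hac (add_left_cancel (hy.eq_of_eq_false (add_mem_nbrs ha) (add_mem_nbrs hc)
      (by simpa using ha') hc'))
  · simp only [not_exists, not_and, Bool.not_eq_false] at hclosed
    exact ⟨(1, 0), by decide, fun a ha _ => hclosed a ha⟩

end Bootstrap

section Rerouting

variable {ω : Config} {y y' z z' u w r r' : Site}

lemma NewlyOpen.chainIn_of_adjStar (hy : NewlyOpen ω y) (hu : adjStar y u) (hw : adjStar y w)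
    (hw' : ω w = true) : ChainIn {z | ω z = true} adjStar u w := by
  obtain ⟨c, hc, hopen⟩ := hy.exists_axis
  obtain ⟨h, hh, hhc, hreach⟩ := exists_axis_hub c hc
  have toHub : ∀ v, adjStar y v → ChainIn {z | ω z = true} adjStar v (y + h) := by
    intro v hv
    obtain ⟨d, hd, rfl⟩ := adjStar_iff_exists_offset.1 hv
    rcases hreach d hd with rfl | hdh | ⟨a, ha, hac, hda, hah⟩
    · exact .refl
    · exact .single ⟨adjStar_add_left_iff.2 hdh, hopen h hh hhc⟩
    · exact .tail (.single ⟨adjStar_add_left_iff.2 hda, hopen a ha hac⟩)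
        ⟨adjStar_add_left_iff.2 hah, hopen h hh hhc⟩
  exact (toHub u hu).trans (ChainIn.symm adjStar_symm hw' (toHub w hw))

lemma NewlyOpen.exists_open_adjStar_adjStar (hy : NewlyOpen ω y) (hy' : ω y' = false)
    (hyy' : adjStar y y') : ∃ r, ω r = true ∧ adjStar y r ∧ adjStar y' r := by
  obtain ⟨c, hc, hopen⟩ := hy.exists_axis
  obtain ⟨d, hd, rfl⟩ := adjStar_iff_exists_offset.1 hyy'
  have hdc : d ∈ axes → d = c := fun hda => by
    by_contra hne
    simp [hopen d hda hne] at hy'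
  obtain ⟨e, he, hec, hde⟩ := exists_axis_adjStar c hc d hd hdc
  have hye : adjStar y (y + e) :=
    adjStar_iff_exists_offset.2 ⟨e, axes_subset_starOffsets he, rfl⟩
  exact ⟨y + e, hopen e he hec, hye, adjStar_add_left_iff.2 hde⟩

/-- `r` is open in `ω` and stands in for the site `z`, which is open in `step ω`. -/
def IsRep (ω : Config) (z r : Site) : Prop :=
  ω r = true ∧ (r = z ∨ NewlyOpen ω z ∧ adjStar z r)

lemma exists_isRep (hz : step ω z = true) : ∃ r, IsRep ω z r := by
  cases hωz : ω z with
  | true => exact ⟨z, hωz, .inl rfl⟩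
  | false =>
    obtain ⟨r, hr, hr'⟩ := NewlyOpen.exists_open_nbr ⟨hωz, hz⟩
    exact ⟨r, hr', .inr ⟨⟨hωz, hz⟩, adjStar_of_mem_nbrs hr⟩⟩

lemma IsRep.chainIn (hr : IsRep ω z r) (hr' : IsRep ω z r') :
    ChainIn {z | ω z = true} adjStar r r' := by
  obtain ⟨hr, rfl | ⟨hz, hzr⟩⟩ := hr <;> obtain ⟨hr', rfl | ⟨hz', hzr'⟩⟩ := hr'
  · exact .refl
  · simp [hz'.1] at hr
  · simp [hz.1] at hr'
  · exact hz.chainIn_of_adjStar hzr hzr' hr'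

lemma IsRep.chainIn_of_adjStar (hzz' : adjStar z z') (hr : IsRep ω z r) (hr' : IsRep ω z' r') :
    ChainIn {z | ω z = true} adjStar r r' := by
  obtain ⟨hr, rfl | ⟨hz, hzr⟩⟩ := hr <;> obtain ⟨hr', rfl | ⟨hz', hzr'⟩⟩ := hr'
  · exact .single ⟨hzz', hr'⟩
  · exact hz'.chainIn_of_adjStar (adjStar_symm hzz') hzr' hr'
  · exact hz.chainIn_of_adjStar hzr hzz' hr'
  · obtain ⟨s, hs, hzs, hz's⟩ := hz.exists_open_adjStar_adjStar hz'.1 hzz'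
    exact (hz.chainIn_of_adjStar hzr hzs hs).trans (hz'.chainIn_of_adjStar hz's hzr' hr')

lemma chainIn_of_chainIn_step (hz : step ω z = true)
    (h : ChainIn {v | step ω v = true} adjStar z z') (hr : IsRep ω z r) (hr' : IsRep ω z' r') :
    ChainIn {z | ω z = true} adjStar r r' := by
  induction h generalizing r' with
  | refl => exact hr.chainIn hr'
  | @tail v z' hzv hvz' ih =>
    obtain ⟨rv, hrv⟩ := exists_isRep (ChainIn.mem hz hzv)
    exact (ih hrv).trans (hrv.chainIn_of_adjStar hvz'.1 hr')

end Rerouting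

section Connection

variable {ω : Config} {a b : Site}

lemma connIn_of_connIn_step (ha : ω a = true) (hb : ω b = true)
    (h : ConnIn {z | step ω z = true} adjStar a b) : ConnIn {z | ω z = true} adjStar a b :=
  connIn_iff_chainIn.2 ⟨ha, chainIn_of_chainIn_step (setOf_eq_true_subset (le_step ω) ha)
    (connIn_iff_chainIn.1 h).2 ⟨ha, .inl rfl⟩ ⟨hb, .inl rfl⟩⟩

lemma connIn_of_connIn_evolve (ha : ω a = true) (hb : ω b = true) (n : ℕ)
    (h : ConnIn {z | evolve ω n z = true} adjStar a b) : ConnIn {z | ω z = true} adjStar a b := by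
  induction n with
  | zero => exact h
  | succ n ih =>
    exact ih (connIn_of_connIn_step (evolve_eq_true_of_eq_true ha n)
      (evolve_eq_true_of_eq_true hb n) h)

lemma ConnIn.exists_evolve {A : Site → Site → Prop} (h : ConnIn {z | finalOpen ω z} A a b) :
    ∃ n, ConnIn {z | evolve ω n z = true} A a b := by
  obtain ⟨k, π, h0, hk, hinj, hA, hS⟩ := h
  choose N hN using hS
  refine ⟨Finset.univ.sup N, k, π, h0, hk, hinj, hA, fun i => ?_⟩
  exact setOf_eq_true_subset (monotone_evolve_time ω (Finset.le_sup (Finset.mem_univ i))) (hN i)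

lemma measurableSet_connIn (A : Site → Site → Prop) (a b : Site) :
    MeasurableSet {ω : Config | ConnIn {z | ω z = true} A a b} := by
  simp only [ConnIn, IsPathIn, Set.mem_ofPred_eq, Set.ofPred_exists, Set.ofPred_and,
    Set.ofPred_forall]
  measurability

end Connection

section Bernoulli

variable {p : ℝ} {μ : Measure Config}

def openOn (s : Finset Site) (ω : Config) : Config := fun z => if z ∈ s then true else ω z

lemma le_openOn (s : Finset Site) (ω : Config) : ω ≤ openOn s ω := fun z =>
  Bool.le_iff_imp.2 fun h => by simp [openOn, h]

lemma openOn_eq_true {s : Finset Site} {z : Site} (hz : z ∈ s) (ω : Config) :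
    openOn s ω z = true := if_pos hz

lemma measurableSet_eq_true (z : Site) : MeasurableSet {ω : Config | ω z = true} :=
  (measurableSet_singleton true).preimage (measurable_pi_apply z)

lemma IsBernoulli.measure_allOpen (h : IsBernoulli p μ) (hp : 0 ≤ p) (s : Finset Site) :
    μ {ω | ∀ z ∈ s, ω z = true} = ENNReal.ofReal (p ^ s.card) := by
  simpa [ENNReal.ofReal_pow hp] using h s fun _ => true

lemma IsBernoulli.le_one (h : IsBernoulli p μ) [IsProbabilityMeasure μ] : p ≤ 1 := by
  have hμ : μ {ω | ω 0 = true} = ENNReal.ofReal p := by simpa using h {0} fun _ => true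
  exact ENNReal.ofReal_le_one.1 (hμ ▸ prob_le_one)

lemma IsBernoulli.iIndepSet (h : IsBernoulli p μ) (hp : 0 ≤ p) :
    iIndepSet (fun z : Site => {ω : Config | ω z = true}) μ := by
  refine (iIndepSet_iff_meas_biInter measurableSet_eq_true).2 fun s => ?_
  have hz : ∀ z, μ {ω : Config | ω z = true} = ENNReal.ofReal p := fun z => by
    simpa using h.measure_allOpen hp {z}
  simpa [Set.iInter_ofPred, hz, ENNReal.ofReal_pow hp] using h.measure_allOpen hp s

/-- `openOn s ⁻¹' E` depends only on the sites outside `s`, hence is independent of the event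
that all sites of `s` are open. -/
lemma IsBernoulli.measure_preimage_openOn_inter (h : IsBernoulli p μ) (hp : 0 ≤ p)
    (s : Finset Site) {E : Set Config} (hE : MeasurableSet E) :
    μ (openOn s ⁻¹' E ∩ {ω | ∀ z ∈ s, ω z = true}) =
      μ (openOn s ⁻¹' E) * ENNReal.ofReal (p ^ s.card) := by
  have hindep := (h.iIndepSet hp).indep_generateFrom_of_disjoint measurableSet_eq_true
    (↑s)ᶜ ↑s disjoint_compl_left
  rw [Indep_iff] at hindep
  rw [hindep, h.measure_allOpen hp]
  · refine hE.preimage ?_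
    refine @measurable_pi_lambda _ _ _ (_) _ _ fun z => ?_
    by_cases hz : z ∈ s
    · simp only [openOn, if_pos hz]
      exact measurable_const
    · simp only [openOn, if_neg hz]
      exact measurable_to_bool (MeasurableSpace.measurableSet_generateFrom ⟨z, hz, rfl⟩)
  · rw [show {ω : Config | ∀ z ∈ s, ω z = true} = ⋂ z ∈ s, {ω | ω z = true} by
      ext; simp]
    exact Finset.measurableSet_biInter s fun z hz =>
      MeasurableSpace.measurableSet_generateFrom ⟨z, hz, rfl⟩

lemma IsBernoulli.measure_le_of_openOn_mem (h : IsBernoulli p μ) (hp : 0 < p) (s : Finset Site)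
    {E F : Set Config} (hE : MeasurableSet E) (hFE : ∀ ω ∈ F, openOn s ω ∈ E) :
    μ F ≤ ENNReal.ofReal (p ^ (-(s.card : ℝ))) * μ E := by
  have hcap : openOn s ⁻¹' E ∩ {ω | ∀ z ∈ s, ω z = true} ⊆ E := by
    rintro ω ⟨hω, hs⟩
    have : openOn s ω = ω := funext fun z => by by_cases hz : z ∈ s <;> simp [openOn, hz, hs z]
    rwa [Set.mem_preimage, this] at hω
  have hpos : ENNReal.ofReal (p ^ s.card) ≠ 0 := by simp [hp]
  calc μ F ≤ μ (openOn s ⁻¹' E) := measure_mono hFE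
    _ ≤ μ E / ENNReal.ofReal (p ^ s.card) := by
        rw [ENNReal.le_div_iff_mul_le (.inl hpos) (.inl ENNReal.ofReal_ne_top),
          ← h.measure_preimage_openOn_inter hp.le s hE]
        exact measure_mono hcap
    _ = ENNReal.ofReal (p ^ (-(s.card : ℝ))) * μ E := by
        rw [div_eq_mul_inv, mul_comm, ← ENNReal.ofReal_inv_of_pos (by positivity),
          Real.rpow_neg hp.le, Real.rpow_natCast]

end Bernoulli

/-- There is a constant `c₂` such that for `p ∈ (0, p_c^*]`, every `x` and every
`n ∈ [1,∞]`, the two-point `*`-connectivity functions satisfy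
`τ_p(x) ≤ τ_{p,n}(x) ≤ p^{-c₂} τ_p(x)`. -/
theorem tau_sandwich :
    ∃ c2 : ℝ, ∀ (p : ℝ), 0 < p → p ≤ 1 - pc →
      ∀ (μ : Measure Config), IsProbabilityMeasure μ → IsBernoulli p μ →
      ∀ x : Site,
      (∀ n : ℕ, 1 ≤ n →
        μ {ω : Config | ConnIn {z | ω z = true} adjStar (0, 0) x}
          ≤ μ {ω : Config | ConnIn {z | evolve ω n z = true} adjStar (0, 0) x}
        ∧ μ {ω : Config | ConnIn {z | evolve ω n z = true} adjStar (0, 0) x}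
          ≤ ENNReal.ofReal (p ^ (-c2))
              * μ {ω : Config | ConnIn {z | ω z = true} adjStar (0, 0) x})
      ∧ (μ {ω : Config | ConnIn {z | ω z = true} adjStar (0, 0) x}
          ≤ μ {ω : Config | ConnIn {z | finalOpen ω z} adjStar (0, 0) x}
        ∧ μ {ω : Config | ConnIn {z | finalOpen ω z} adjStar (0, 0) x}
          ≤ ENNReal.ofReal (p ^ (-c2))
              * μ {ω : Config | ConnIn {z | ω z = true} adjStar (0, 0) x}) := by
  refine ⟨2, fun p hp _ μ _ hμ x => ?_⟩
  set s : Finset Site := {(0, 0), x}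
  set E := {ω : Config | ConnIn {z | ω z = true} adjStar (0, 0) x}
  have upper (F : Set Config) (hF : ∀ ω ∈ F, openOn s ω ∈ E) :
      μ F ≤ ENNReal.ofReal (p ^ (-2 : ℝ)) * μ E := by
    refine (hμ.measure_le_of_openOn_mem hp s (measurableSet_connIn _ _ _) hF).trans ?_
    gcongr ?_ * _
    refine ENNReal.ofReal_le_ofReal (Real.rpow_le_rpow_of_exponent_ge hp hμ.le_one ?_)
    exact neg_le_neg (by exact_mod_cast Finset.card_le_two)
  have reroute (ω : Config) (n : ℕ)
      (h : ConnIn {z | evolve ω n z = true} adjStar (0, 0) x) : openOn s ω ∈ E :=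
    connIn_of_connIn_evolve (openOn_eq_true (by simp [s]) ω) (openOn_eq_true (by simp [s]) ω) n
      (h.mono (setOf_eq_true_subset (monotone_evolve n (le_openOn s ω))))
  refine ⟨fun n _ => ⟨?_, upper _ fun ω hω => reroute ω n hω⟩, ?_,
    upper _ fun ω hω => ?_⟩
  · exact measure_mono fun ω hω => hω.mono fun z hz => evolve_eq_true_of_eq_true hz n
  · exact measure_mono fun ω hω => hω.mono fun z hz => ⟨0, hz⟩
  · obtain ⟨n, hn⟩ := hω.exists_evolve
    exact reroute ω n hn
end
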